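/- arXiv:2603.10318 — 8 statements merged into one kernel-verified Lean document; each statement's English description precedes it below -/
import Mathlib

section
/- For any π-stationary transition matrix P on a finite state space partitioned into orbits O_1,…,O_k, and any l ∈ ℕ, the l-th power of the group-averaged kernel satisfies (GPG)^l(x,y) = P̄^l(i,j) · π(y)/π(O_j) whenever x ∈ O_i and y ∈ O_j, where G is the Gibbs kernel of the partition and P̄ is the projection chain. -/
open Finset Matrix

namespace GpgStmt

noncomputable section

variable {X : Type*}

/-- Matrix with all rows equal to π. -/
def Pimat {X : Type*} (π : X → ℝ) : Matrix X X ℝ := Matrix.of fun _ y => π y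

def IsStochastic [Fintype X] (P : Matrix X X ℝ) : Prop :=
  (∀ x y, 0 ≤ P x y) ∧ ∀ x, ∑ y, P x y = 1

/-- π-stationary transition matrix. -/
def IsStationary [Fintype X] (π : X → ℝ) (P : Matrix X X ℝ) : Prop :=
  IsStochastic P ∧ ∀ y, ∑ x, π x * P x y = π y

/-- π-reversible transition matrix. -/
def IsReversible [Fintype X] (π : X → ℝ) (P : Matrix X X ℝ) : Prop :=
  IsStochastic P ∧ ∀ x y, π x * P x y = π y * P y x

/-- mass of the orbit O_i = {x | o x = i}. -/
def orbMass [Fintype X] {k : ℕ} (π : X → ℝ) (o : X → Fin k) (i : Fin k) : ℝ :=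
  ∑ x ∈ Finset.filter (fun x => o x = i) Finset.univ, π x

/-- Gibbs kernel of the orbit partition induced by o. -/
def gibbs [Fintype X] {k : ℕ} (π : X → ℝ) (o : X → Fin k) : Matrix X X ℝ :=
  Matrix.of fun x y => if o x = o y then π y / orbMass π o (o x) else 0

/-- Projection chain P̄ of P with respect to the orbit partition induced by o. -/
def projChain [Fintype X] {k : ℕ} (π : X → ℝ) (o : X → Fin k) (P : Matrix X X ℝ) :
    Matrix (Fin k) (Fin k) ℝ :=
  Matrix.of fun i j => (1 / orbMass π o i) *
    ∑ x ∈ Finset.filter (fun x => o x = i) Finset.univ,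
      ∑ y ∈ Finset.filter (fun y => o y = j) Finset.univ, π x * P x y

/-- π-weighted KL divergence between transition matrices, with 0·log(0/a) = 0. -/
def klDiv {X : Type*} [Fintype X] (π : X → ℝ) (Q R : Matrix X X ℝ) : ℝ :=
  ∑ x, ∑ y, π x * Q x y * Real.log (Q x y / R x y)

/-- ℓ²(π)-adjoint of a matrix. -/
def piAdj [Fintype X] (π : X → ℝ) (M : Matrix X X ℝ) : Matrix X X ℝ :=
  Matrix.of fun x y => π y * M y x / π x

/-- squared π-weighted Frobenius norm ‖M‖²_{F,π} = Tr(M*M). -/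
def frobSq [Fintype X] (π : X → ℝ) (M : Matrix X X ℝ) : ℝ :=
  Matrix.trace (piAdj π M * M)

/-- π-mass of a finite set. -/
def mass [Fintype X] (π : X → ℝ) (S : Finset X) : ℝ := ∑ x ∈ S, π x

/-- Two-block Gibbs kernel G_S for the partition X = S ⊔ Sᶜ. -/
def gibbsTwo [Fintype X] [DecidableEq X] (π : X → ℝ) (S : Finset X) : Matrix X X ℝ :=
  Matrix.of fun x y =>
    if x ∈ S then (if y ∈ S then π y / mass π S else 0)
    else (if y ∈ S then 0 else π y / mass π Sᶜ)

/-- g(S) = (1/(π(S)π(S'))) Σ_{x∈S,y∈S'} π(x) P²(x,y). -/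
def gfun [Fintype X] [DecidableEq X] (π : X → ℝ) (P : Matrix X X ℝ) (S : Finset X) : ℝ :=
  (1 / (mass π S * mass π Sᶜ)) * ∑ x ∈ S, ∑ y ∈ Sᶜ, π x * (P * P) x y

/-- h(S) = (1/π(S)) Σ_{x∈S,y∈S'} π(x) P²(x,y). -/
def hfun [Fintype X] [DecidableEq X] (π : X → ℝ) (P : Matrix X X ℝ) (S : Finset X) : ℝ :=
  (1 / mass π S) * ∑ x ∈ S, ∑ y ∈ Sᶜ, π x * (P * P) x y

/-- Ergodicity (primitivity): some power of P has all entries positive. -/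
def IsErgodic [Fintype X] [DecidableEq X] (P : Matrix X X ℝ) : Prop :=
  ∃ m : ℕ, ∀ x y, 0 < (P ^ m) x y

/-- Shannon entropy of π. -/
def shannonEnt [Fintype X] (π : X → ℝ) : ℝ := -∑ x, π x * Real.log (π x)

/-- Entropy rate H_π(Q). -/
def entRate [Fintype X] (π : X → ℝ) (Q : Matrix X X ℝ) : ℝ :=
  -∑ x, ∑ y, π x * Q x y * Real.log (Q x y)

/-- Supermodular set function on 2^X. -/
def Supermodular {X : Type*} [DecidableEq X] (F : Finset X → ℝ) : Prop :=
  ∀ A B : Finset X, F A + F B ≤ F (A ∩ B) + F (A ∪ B)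

/-- Submodular set function on 2^X. -/
def Submodular {X : Type*} [DecidableEq X] (F : Finset X → ℝ) : Prop :=
  ∀ A B : Finset X, F (A ∩ B) + F (A ∪ B) ≤ F A + F B

lemma orbMass_pos [Fintype X] {k : ℕ} (π : X → ℝ) (o : X → Fin k)
    (hπ : ∀ x, 0 < π x) (ho : Function.Surjective o) (i : Fin k) :
    0 < orbMass π o i := by
  obtain ⟨x, hx⟩ := ho i
  apply Finset.sum_pos (fun z _ => hπ z)
  exact ⟨x, by simp [hx]⟩

lemma sum_orbit [Fintype X] {k : ℕ} (π : X → ℝ) (o : X → Fin k)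
    (hπ : ∀ x, 0 < π x) (ho : Function.Surjective o) (f : Fin k → ℝ) :
    ∑ z, f (o z) * (π z / orbMass π o (o z)) = ∑ j, f j := by
  rw [← Finset.sum_fiberwise (g := o) (f := fun z => f (o z) * (π z / orbMass π o (o z)))]
  refine Finset.sum_congr rfl fun j _ => ?_
  have : ∀ z ∈ Finset.filter (fun z => o z = j) Finset.univ,
      f (o z) * (π z / orbMass π o (o z)) = f j / orbMass π o j * π z := by
    intro z hz
    simp only [Finset.mem_filter] at hz
    rw [hz.2]; ring
  rw [Finset.sum_congr rfl this, ← Finset.mul_sum]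
  have hm := (orbMass_pos π o hπ ho j).ne'
  rw [orbMass] at hm ⊢
  field_simp

lemma gpg_apply [Fintype X] [DecidableEq X] {k : ℕ} (π : X → ℝ) (o : X → Fin k)
    (hπ : ∀ x, 0 < π x) (ho : Function.Surjective o) (P : Matrix X X ℝ) (x y : X) :
    (gibbs π o * P * gibbs π o) x y
      = (projChain π o P) (o x) (o y) * (π y / orbMass π o (o y)) := by
  simp only [Matrix.mul_apply, gibbs, projChain, Matrix.of_apply, Finset.sum_filter,
    Finset.sum_mul, Finset.mul_sum]
  rw [Finset.sum_comm]
  refine Finset.sum_congr rfl fun w _ => ?_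
  by_cases h1 : o w = o x
  · simp only [if_pos h1, if_pos h1.symm]
    rw [Finset.mul_sum, Finset.sum_mul]
    refine Finset.sum_congr rfl fun z _ => ?_
    by_cases h2 : o z = o y
    · simp only [if_pos h2]
      rw [h2]; ring
    · simp [h2]
  · simp [Ne.symm h1, h1]

lemma gpg_pow [Fintype X] [DecidableEq X] {k : ℕ} (π : X → ℝ) (o : X → Fin k)
    (hπ : ∀ x, 0 < π x) (ho : Function.Surjective o) (P : Matrix X X ℝ)
    (l : ℕ) (hl : 0 < l) (x y : X) :
    ((gibbs π o * P * gibbs π o) ^ l) x y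
      = ((projChain π o P) ^ l) (o x) (o y) * (π y / orbMass π o (o y)) := by
  induction l generalizing x y with
  | zero => exact absurd hl (lt_irrefl 0)
  | succ n ih =>
    rcases Nat.eq_zero_or_pos n with hn | hn
    · subst hn; simpa using gpg_apply π o hπ ho P x y
    · rw [pow_succ, Matrix.mul_apply]
      have h : ∀ z, ((gibbs π o * P * gibbs π o) ^ n) x z
          * (gibbs π o * P * gibbs π o) z y
          = (((projChain π o P) ^ n) (o x) (o z)
              * ((projChain π o P) (o z) (o y) * (π y / orbMass π o (o y))))
            * (π z / orbMass π o (o z)) := by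
        intro z
        rw [ih hn x z, gpg_apply π o hπ ho P z y]; ring
      rw [Finset.sum_congr rfl fun z _ => h z,
        sum_orbit π o hπ ho
          (fun j => ((projChain π o P) ^ n) (o x) j
            * ((projChain π o P) j (o y) * (π y / orbMass π o (o y))))]
      rw [pow_succ, Matrix.mul_apply, Finset.sum_mul]
      exact Finset.sum_congr rfl fun j _ => by ring

/-- (GPG)^l(x,y) = P̄^l(o x, o y) · π(y)/π(O(y)). -/
theorem stmt0 [Fintype X] [DecidableEq X] {k : ℕ} (π : X → ℝ) (o : X → Fin k)
    (hπ : ∀ x, 0 < π x) (hsum : ∑ x, π x = 1) (ho : Function.Surjective o)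
    (P : Matrix X X ℝ) (hP : IsStationary π P) (l : ℕ) (hl : 0 < l) (x y : X) :
    ((gibbs π o * P * gibbs π o) ^ l) x y
      = ((projChain π o P) ^ l) (o x) (o y) * (π y / orbMass π o (o y)) := by
  exact gpg_pow π o hπ ho P l hl x y

end
end GpgStmt
end

section
/- For any π-stationary P, any orbit partition of X, and any l ∈ ℕ, the KL divergence of (GPG)^l from Π (the matrix with all rows equal to π), weighted by π, equals the KL divergence of P̄^l from Π̄ weighted by π̄: D_KL^π((GPG)^l ‖ Π) = D_KL^{π̄}(P̄^l ‖ Π̄). -/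
open Finset Matrix

namespace GpgStmt

noncomputable section

variable {X : Type*}

/-- Lift a k×k matrix to an X×X matrix via the orbit map. -/
def lift [Fintype X] {k : ℕ} (π : X → ℝ) (o : X → Fin k)
    (M : Matrix (Fin k) (Fin k) ℝ) : Matrix X X ℝ :=
  Matrix.of fun x y => π y / orbMass π o (o y) * M (o x) (o y)

lemma lift_mul [Fintype X] {k : ℕ} (π : X → ℝ) (o : X → Fin k)
    (hπ : ∀ x, 0 < π x) (ho : Function.Surjective o)
    (M N : Matrix (Fin k) (Fin k) ℝ) :
    lift π o M * lift π o N = lift π o (M * N) := by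
  have hm : ∀ i, orbMass π o i ≠ 0 := fun i => (orbMass_pos π o hπ ho i).ne'
  ext x y
  simp only [Matrix.mul_apply, lift, Matrix.of_apply]
  rw [← Finset.sum_fiberwise Finset.univ o
    (fun z => π z / orbMass π o (o z) * M (o x) (o z) *
      (π y / orbMass π o (o y) * N (o z) (o y)))]
  have key : ∀ j : Fin k,
      (∑ z ∈ Finset.filter (fun z => o z = j) Finset.univ,
        π z / orbMass π o (o z) * M (o x) (o z) *
          (π y / orbMass π o (o y) * N (o z) (o y)))
      = π y / orbMass π o (o y) * (M (o x) j * N j (o y)) := by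
    intro j
    have h1 : (∑ z ∈ Finset.filter (fun z => o z = j) Finset.univ,
        π z / orbMass π o (o z) * M (o x) (o z) *
          (π y / orbMass π o (o y) * N (o z) (o y)))
        = (∑ z ∈ Finset.filter (fun z => o z = j) Finset.univ, π z) *
            (M (o x) j * (π y / orbMass π o (o y) * N j (o y)) / orbMass π o j) := by
      rw [Finset.sum_mul]
      refine Finset.sum_congr rfl fun z hz => ?_
      have hz' : o z = j := (Finset.mem_filter.mp hz).2
      rw [hz']
      ring
    rw [h1]
    have h2 : (∑ z ∈ Finset.filter (fun z => o z = j) Finset.univ, π z)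
        = orbMass π o j := rfl
    rw [h2, mul_comm, div_mul_cancel₀ _ (hm j)]
    ring
  rw [Finset.sum_congr rfl fun j _ => key j, ← Finset.mul_sum]

lemma gpg_eq_lift [Fintype X] [DecidableEq X] {k : ℕ} (π : X → ℝ) (o : X → Fin k)
    (hπ : ∀ x, 0 < π x) (ho : Function.Surjective o) (P : Matrix X X ℝ) :
    gibbs π o * P * gibbs π o = lift π o (projChain π o P) := by
  have hm : ∀ i, orbMass π o i ≠ 0 := fun i => (orbMass_pos π o hπ ho i).ne'
  ext x y
  simp only [Matrix.mul_apply, gibbs, lift, projChain, Matrix.of_apply]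
  have inner : ∀ w : X,
      (∑ z, (if o x = o z then π z / orbMass π o (o x) else 0) * P z w)
      = (∑ z ∈ Finset.filter (fun z => o z = o x) Finset.univ, π z * P z w)
          / orbMass π o (o x) := by
    intro w
    rw [Finset.sum_div, Finset.sum_filter]
    refine Finset.sum_congr rfl fun z _ => ?_
    by_cases h : o z = o x
    · rw [if_pos h.symm, if_pos h]
      ring
    · rw [if_neg (fun hh => h hh.symm), if_neg h, zero_mul]
  calc (∑ w, (∑ z, (if o x = o z then π z / orbMass π o (o x) else 0) * P z w) *
        (if o w = o y then π y / orbMass π o (o w) else 0))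
      = ∑ w, (if o w = o y then
          (∑ z ∈ Finset.filter (fun z => o z = o x) Finset.univ, π z * P z w)
            / orbMass π o (o x) * (π y / orbMass π o (o y)) else 0) := by
        refine Finset.sum_congr rfl fun w _ => ?_
        rw [inner w]
        by_cases h : o w = o y
        · simp [h]
        · simp [h]
    _ = ∑ w ∈ Finset.filter (fun w => o w = o y) Finset.univ,
          (∑ z ∈ Finset.filter (fun z => o z = o x) Finset.univ, π z * P z w)
            / orbMass π o (o x) * (π y / orbMass π o (o y)) := by
        rw [Finset.sum_filter]
    _ = π y / orbMass π o (o y) *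
          (1 / orbMass π o (o x) *
            ∑ z ∈ Finset.filter (fun z => o z = o x) Finset.univ,
              ∑ w ∈ Finset.filter (fun w => o w = o y) Finset.univ, π z * P z w) := by
        rw [Finset.sum_comm]
        rw [Finset.mul_sum, Finset.mul_sum]
        refine Finset.sum_congr rfl fun z _ => ?_
        rw [Finset.sum_div, Finset.sum_mul, Finset.mul_sum, Finset.mul_sum]
        refine Finset.sum_congr rfl fun w _ => ?_
        ring

lemma klDiv_lift [Fintype X] {k : ℕ} (π : X → ℝ) (o : X → Fin k)
    (hπ : ∀ x, 0 < π x) (ho : Function.Surjective o)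
    (M : Matrix (Fin k) (Fin k) ℝ) :
    klDiv π (lift π o M) (Pimat π)
      = klDiv (orbMass π o) M (Pimat (orbMass π o)) := by
  have hm : ∀ i, orbMass π o i ≠ 0 := fun i => (orbMass_pos π o hπ ho i).ne'
  unfold klDiv lift Pimat
  simp only [Matrix.of_apply]
  have step1 : ∀ x : X,
      (∑ y, π x * (π y / orbMass π o (o y) * M (o x) (o y)) *
        Real.log (π y / orbMass π o (o y) * M (o x) (o y) / π y))
      = ∑ j, π x * (M (o x) j * Real.log (M (o x) j / orbMass π o j)) := by
    intro x
    rw [← Finset.sum_fiberwise Finset.univ o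
      (fun y => π x * (π y / orbMass π o (o y) * M (o x) (o y)) *
        Real.log (π y / orbMass π o (o y) * M (o x) (o y) / π y))]
    refine Finset.sum_congr rfl fun j _ => ?_
    have h1 : (∑ y ∈ Finset.filter (fun y => o y = j) Finset.univ,
        π x * (π y / orbMass π o (o y) * M (o x) (o y)) *
          Real.log (π y / orbMass π o (o y) * M (o x) (o y) / π y))
        = (∑ y ∈ Finset.filter (fun y => o y = j) Finset.univ, π y) *
            (π x * (M (o x) j * Real.log (M (o x) j / orbMass π o j))
              / orbMass π o j) := by
      rw [Finset.sum_mul]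
      refine Finset.sum_congr rfl fun y hy => ?_
      have hy' : o y = j := (Finset.mem_filter.mp hy).2
      rw [hy']
      have hπy : π y ≠ 0 := (hπ y).ne'
      have harg : π y / orbMass π o j * M (o x) j / π y
          = M (o x) j / orbMass π o j := by
        rw [div_mul_eq_mul_div, div_div, mul_comm (orbMass π o j) (π y),
          mul_div_mul_left _ _ hπy]
      rw [harg]
      ring
    rw [h1]
    have h2 : (∑ y ∈ Finset.filter (fun y => o y = j) Finset.univ, π y)
        = orbMass π o j := rfl
    rw [h2, mul_div_cancel₀ _ (hm j)]
  rw [Finset.sum_congr rfl fun x _ => step1 x]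
  rw [← Finset.sum_fiberwise Finset.univ o
    (fun x => ∑ j, π x * (M (o x) j * Real.log (M (o x) j / orbMass π o j)))]
  refine Finset.sum_congr rfl fun i _ => ?_
  rw [Finset.sum_comm]
  refine Finset.sum_congr rfl fun j _ => ?_
  have hcong : ∀ x ∈ Finset.filter (fun x => o x = i) Finset.univ,
      π x * (M (o x) j * Real.log (M (o x) j / orbMass π o j))
        = π x * (M i j * Real.log (M i j / orbMass π o j)) := by
    intro x hx
    rw [(Finset.mem_filter.mp hx).2]
  rw [Finset.sum_congr rfl hcong, ← Finset.sum_mul,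
    show (∑ x ∈ Finset.filter (fun x => o x = i) Finset.univ, π x)
      = orbMass π o i from rfl]
  ring


/-- D_KL^π((GPG)^l ‖ Π) = D_KL^{π̄}(P̄^l ‖ Π̄). -/
theorem stmt1 [Fintype X] [DecidableEq X] {k : ℕ} (π : X → ℝ) (o : X → Fin k)
    (hπ : ∀ x, 0 < π x) (hsum : ∑ x, π x = 1) (ho : Function.Surjective o)
    (P : Matrix X X ℝ) (hP : IsStationary π P) (l : ℕ) (hl : 0 < l) :
    klDiv π ((gibbs π o * P * gibbs π o) ^ l) (Pimat π)
      = klDiv (orbMass π o) ((projChain π o P) ^ l) (Pimat (orbMass π o)) := by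
  have hm : ∀ i, orbMass π o i ≠ 0 := fun i => (orbMass_pos π o hπ ho i).ne'
  have hpow : (gibbs π o * P * gibbs π o) ^ l = lift π o ((projChain π o P) ^ l) := by
    obtain ⟨n, rfl⟩ := Nat.exists_eq_add_of_lt hl
    clear hl
    induction n with
    | zero => simpa using gpg_eq_lift π o hπ ho P
    | succ n ih =>
        rw [show 0 + (n + 1) + 1 = (0 + n + 1) + 1 from by ring, pow_succ, ih,
          gpg_eq_lift π o hπ ho P, lift_mul π o hπ ho, ← pow_succ]
  rw [hpow, klDiv_lift π o hπ ho]


end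
end GpgStmt
end

section
/- For π-reversible P, any orbit partition with Gibbs kernel G, and l ≥ 2, the chain of inequalities D_KL^π((GPG)^l ‖ Π) ≤ D_KL^π((PG)^l ‖ Π) = D_KL^π((GP)^l ‖ Π) ≤ D_KL^π((GPG)^{l−1} ‖ Π) holds. -/
open Finset Matrix

namespace GpgStmt

noncomputable section

variable {X : Type*}

section MyAux
variable [Fintype X] [DecidableEq X]

lemma my_phi_convexOn {c : ℝ} (hc : 0 < c) :
    ConvexOn ℝ (Set.Ici 0) (fun t : ℝ => t * Real.log (t / c)) := by
  have heq : (fun t : ℝ => t * Real.log (t / c))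
      = fun t : ℝ => t * Real.log t + (-Real.log c) * t := by
    funext t
    by_cases ht : t = 0
    · simp [ht]
    · rw [Real.log_div ht hc.ne']; ring
  rw [heq]
  refine Real.convexOn_mul_log.add ?_
  exact ⟨convex_Ici 0, fun x _ y _ p q _ _ _ => le_of_eq (by simp [smul_eq_mul]; ring)⟩

lemma my_one_stochastic : IsStochastic (1 : Matrix X X ℝ) := by
  constructor
  · intro x y
    by_cases h : x = y <;> simp [Matrix.one_apply, h]
  · intro x; simp [Matrix.one_apply]

lemma my_mul_stochastic {A B : Matrix X X ℝ} (hA : IsStochastic A) (hB : IsStochastic B) :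
    IsStochastic (A * B) := by
  constructor
  · intro x y
    simp only [Matrix.mul_apply]
    exact Finset.sum_nonneg fun z _ => mul_nonneg (hA.1 x z) (hB.1 z y)
  · intro x
    simp only [Matrix.mul_apply]
    rw [Finset.sum_comm]
    calc (∑ z, ∑ y, A x z * B z y) = ∑ z, A x z * ∑ y, B z y := by
          simp [Finset.mul_sum]
      _ = 1 := by simp [hB.2, hA.2]

lemma my_pow_stochastic {A : Matrix X X ℝ} (hA : IsStochastic A) (n : ℕ) :
    IsStochastic (A ^ n) := by
  induction n with
  | zero => simpa using my_one_stochastic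
  | succ n ih => rw [pow_succ]; exact my_mul_stochastic ih hA

lemma my_rev_stationary {π : X → ℝ} {P : Matrix X X ℝ} (hP : IsReversible π P) :
    ∀ y, ∑ x, π x * P x y = π y := by
  intro y
  calc (∑ x, π x * P x y) = ∑ x, π y * P y x :=
        Finset.sum_congr rfl fun x _ => hP.2 x y
    _ = π y * ∑ x, P y x := by rw [Finset.mul_sum]
    _ = π y := by rw [hP.1.2]; ring

/-- Weak data-processing inequality. -/
lemma my_dpi (π : X → ℝ) (hπ : ∀ x, 0 < π x)
    (A : Matrix X X ℝ) (hA : IsStochastic A) (hAst : ∀ z, ∑ x, π x * A x z = π z)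
    (Q : Matrix X X ℝ) (hQ : ∀ x y, 0 ≤ Q x y) :
    klDiv π (A * Q) (Pimat π) ≤ klDiv π Q (Pimat π) := by
  have key : klDiv π (A * Q) (Pimat π)
      ≤ ∑ x, ∑ y, ∑ z, (π x * A x z) * (Q z y * Real.log (Q z y / π y)) := by
    unfold klDiv
    refine Finset.sum_le_sum fun x _ => Finset.sum_le_sum fun y _ => ?_
    have hJ : ((A * Q) x y) * Real.log ((A * Q) x y / π y)
        ≤ ∑ z, A x z * (Q z y * Real.log (Q z y / π y)) := by
      have := (my_phi_convexOn (hπ y)).map_sum_le (t := Finset.univ)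
        (w := fun z => A x z) (p := fun z => Q z y)
        (fun z _ => hA.1 x z) (hA.2 x) (fun z _ => hQ z y)
      simpa [Matrix.mul_apply, smul_eq_mul] using this
    calc π x * (A * Q) x y * Real.log ((A * Q) x y / Pimat π x y)
        = π x * ((A * Q) x y * Real.log ((A * Q) x y / π y)) := by
          simp only [Pimat, Matrix.of_apply]; ring
      _ ≤ π x * ∑ z, A x z * (Q z y * Real.log (Q z y / π y)) :=
          mul_le_mul_of_nonneg_left hJ (hπ x).le
      _ = ∑ z, (π x * A x z) * (Q z y * Real.log (Q z y / π y)) := by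
          rw [Finset.mul_sum]; exact Finset.sum_congr rfl fun z _ => by ring
  refine key.trans (le_of_eq ?_)
  calc (∑ x, ∑ y, ∑ z, (π x * A x z) * (Q z y * Real.log (Q z y / π y)))
      = ∑ y, ∑ z, (∑ x, π x * A x z) * (Q z y * Real.log (Q z y / π y)) := by
        rw [Finset.sum_comm]
        refine Finset.sum_congr rfl fun y _ => ?_
        rw [Finset.sum_comm]
        exact Finset.sum_congr rfl fun z _ => (Finset.sum_mul _ _ _).symm
    _ = klDiv π Q (Pimat π) := by
        rw [Finset.sum_comm]
        unfold klDiv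
        refine Finset.sum_congr rfl fun z _ => Finset.sum_congr rfl fun y _ => ?_
        rw [hAst z]
        simp only [Pimat, Matrix.of_apply]; ring

/-- KL bisection / swap equality. -/
lemma my_klDiv_swap (π : X → ℝ) (hπ : ∀ x, 0 < π x) (M N : Matrix X X ℝ)
    (h : ∀ x y, π x * M x y = π y * N y x) :
    klDiv π M (Pimat π) = klDiv π N (Pimat π) := by
  unfold klDiv
  rw [Finset.sum_comm]
  refine Finset.sum_congr rfl fun y _ => Finset.sum_congr rfl fun x _ => ?_
  have h2 : M x y / π y = N y x / π x := by
    rw [div_eq_div_iff (hπ y).ne' (hπ x).ne']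
    nlinarith [h x y]
  simp only [Pimat, Matrix.of_apply]
  rw [h2, h x y]

lemma my_rev_mul (π : X → ℝ) {A A' B B' : Matrix X X ℝ}
    (hA : ∀ x y, π x * A x y = π y * A' y x)
    (hB : ∀ x y, π x * B x y = π y * B' y x) :
    ∀ x y, π x * (A * B) x y = π y * ((B' * A') y x) := by
  intro x y
  simp only [Matrix.mul_apply, Finset.mul_sum]
  refine Finset.sum_congr rfl fun z _ => ?_
  calc π x * (A x z * B z y) = (π x * A x z) * B z y := by ring
    _ = (π z * A' z x) * B z y := by rw [hA x z]
    _ = (π z * B z y) * A' z x := by ring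
    _ = (π y * B' y z) * A' z x := by rw [hB z y]
    _ = π y * (B' y z * A' z x) := by ring

lemma my_rev_pow (π : X → ℝ) {A A' : Matrix X X ℝ}
    (hA : ∀ x y, π x * A x y = π y * A' y x) (n : ℕ) :
    ∀ x y, π x * (A ^ n) x y = π y * ((A' ^ n) y x) := by
  induction n with
  | zero =>
    intro x y
    by_cases h : x = y
    · subst h; simp [Matrix.one_apply]
    · simp [Matrix.one_apply, h, Ne.symm h]
  | succ n ih =>
    intro x y
    rw [pow_succ, pow_succ']
    exact my_rev_mul π ih hA x y

end MyAux

section MyGibbs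
variable [Fintype X] [DecidableEq X] {k : ℕ}

lemma my_orbMass_pos {π : X → ℝ} {o : X → Fin k} (hπ : ∀ x, 0 < π x)
    (ho : Function.Surjective o) (i : Fin k) : 0 < orbMass π o i := by
  obtain ⟨x, hx⟩ := ho i
  exact Finset.sum_pos (fun z _ => hπ z) ⟨x, by simp [hx]⟩

lemma my_gibbs_row_sum {π : X → ℝ} {o : X → Fin k} (hπ : ∀ x, 0 < π x)
    (ho : Function.Surjective o) (x : X) : ∑ y, gibbs π o x y = 1 := by
  have hm := (my_orbMass_pos hπ ho (o x)).ne'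
  calc (∑ y, gibbs π o x y)
      = ∑ y, (if o y = o x then π y / orbMass π o (o x) else 0) := by
        refine Finset.sum_congr rfl fun y _ => ?_
        simp only [gibbs, Matrix.of_apply]
        exact if_congr eq_comm rfl rfl
    _ = ∑ y ∈ Finset.filter (fun y => o y = o x) Finset.univ, π y / orbMass π o (o x) :=
        (Finset.sum_filter _ _).symm
    _ = (∑ y ∈ Finset.filter (fun y => o y = o x) Finset.univ, π y) / orbMass π o (o x) :=
        (Finset.sum_div _ _ _).symm
    _ = orbMass π o (o x) / orbMass π o (o x) := rfl
    _ = 1 := div_self hm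

lemma my_gibbs_stochastic {π : X → ℝ} {o : X → Fin k} (hπ : ∀ x, 0 < π x)
    (ho : Function.Surjective o) : IsStochastic (gibbs π o) := by
  refine ⟨fun x y => ?_, my_gibbs_row_sum hπ ho⟩
  simp only [gibbs, Matrix.of_apply]
  split
  · exact div_nonneg (hπ y).le (my_orbMass_pos hπ ho (o x)).le
  · exact le_refl 0

lemma my_gibbs_rev {π : X → ℝ} {o : X → Fin k} (hπ : ∀ x, 0 < π x)
    (ho : Function.Surjective o) : IsReversible π (gibbs π o) := by
  refine ⟨my_gibbs_stochastic hπ ho, fun x y => ?_⟩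
  simp only [gibbs, Matrix.of_apply]
  by_cases h : o x = o y
  · rw [if_pos h, if_pos h.symm, h]
    ring
  · rw [if_neg h, if_neg (Ne.symm h)]
    ring

lemma my_gibbs_idem {π : X → ℝ} {o : X → Fin k} (hπ : ∀ x, 0 < π x)
    (ho : Function.Surjective o) : gibbs π o * gibbs π o = gibbs π o := by
  ext x y
  simp only [Matrix.mul_apply, gibbs, Matrix.of_apply]
  by_cases h : o x = o y
  · have hm := (my_orbMass_pos hπ ho (o x)).ne'
    rw [if_pos h]
    calc (∑ z, (if o x = o z then π z / orbMass π o (o x) else 0) *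
            (if o z = o y then π y / orbMass π o (o z) else 0))
        = ∑ z, (if o z = o x then
            π z * (π y / (orbMass π o (o x) * orbMass π o (o x))) else 0) := by
          refine Finset.sum_congr rfl fun z _ => ?_
          by_cases hz : o z = o x
          · rw [if_pos hz.symm, if_pos (hz.trans h), if_pos hz, hz]
            field_simp
            try ring
          · rw [if_neg (fun hh => hz hh.symm), if_neg hz, zero_mul]
      _ = ∑ z ∈ Finset.filter (fun z => o z = o x) Finset.univ,
            π z * (π y / (orbMass π o (o x) * orbMass π o (o x))) :=
          (Finset.sum_filter _ _).symm
      _ = orbMass π o (o x) * (π y / (orbMass π o (o x) * orbMass π o (o x))) :=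
          (Finset.sum_mul _ _ _).symm
      _ = π y / orbMass π o (o x) := by
          field_simp
          try ring
  · rw [if_neg h]
    refine Finset.sum_eq_zero fun z _ => ?_
    by_cases h1 : o x = o z
    · rw [if_neg (fun h2 : o z = o y => h (h1.trans h2)), mul_zero]
    · rw [if_neg h1, zero_mul]

end MyGibbs

/-- KL chain of inequalities for l ≥ 2. -/
theorem stmt3 [Fintype X] [DecidableEq X] {k : ℕ} (π : X → ℝ) (o : X → Fin k)
    (hπ : ∀ x, 0 < π x) (hsum : ∑ x, π x = 1) (ho : Function.Surjective o)
    (P : Matrix X X ℝ) (hP : IsReversible π P) (l : ℕ) (hl : 2 ≤ l) :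
    klDiv π ((gibbs π o * P * gibbs π o) ^ l) (Pimat π)
        ≤ klDiv π ((P * gibbs π o) ^ l) (Pimat π) ∧
    klDiv π ((P * gibbs π o) ^ l) (Pimat π)
        = klDiv π ((gibbs π o * P) ^ l) (Pimat π) ∧
    klDiv π ((gibbs π o * P) ^ l) (Pimat π)
        ≤ klDiv π ((gibbs π o * P * gibbs π o) ^ (l - 1)) (Pimat π) := by
  set G := gibbs π o with hGdef
  have hGs : IsStochastic G := my_gibbs_stochastic hπ ho
  have hGr : IsReversible π G := my_gibbs_rev hπ ho
  have hGG : G * G = G := my_gibbs_idem hπ ho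
  have hGst : ∀ z, ∑ x, π x * G x z = π z := my_rev_stationary hGr
  have hPst : ∀ z, ∑ x, π x * P x z = π z := my_rev_stationary hP
  have hPGs : IsStochastic (P * G) := my_mul_stochastic hP.1 hGs
  have hGPs : IsStochastic (G * P) := my_mul_stochastic hGs hP.1
  have hGPGs : IsStochastic (G * P * G) := my_mul_stochastic hGPs hGs
  obtain ⟨m, rfl⟩ : ∃ m, l = m + 2 := ⟨l - 2, by omega⟩
  -- power identities
  have hPGG : ∀ n : ℕ, (P * G) ^ (n + 1) * G = (P * G) ^ (n + 1) := by
    intro n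
    calc (P * G) ^ (n + 1) * G = (P * G) ^ n * (P * G * G) := by
          rw [pow_succ, mul_assoc]
      _ = (P * G) ^ n * (P * G) := by rw [mul_assoc, hGG]
      _ = (P * G) ^ (n + 1) := (pow_succ _ _).symm
  have hGPG : ∀ n : ℕ, (G * P * G) ^ (n + 1) = G * (P * G) ^ (n + 1) := by
    intro n
    induction n with
    | zero => simp [pow_one, mul_assoc]
    | succ n ih =>
      have key : (P * G) ^ (n + 1) * (G * (P * G)) = (P * G) ^ (n + 1 + 1) := by
        rw [← mul_assoc, hPGG n, ← pow_succ]
      calc (G * P * G) ^ (n + 1 + 1) = (G * P * G) ^ (n + 1) * (G * P * G) := pow_succ _ _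
        _ = G * (P * G) ^ (n + 1) * (G * (P * G)) := by rw [ih, mul_assoc G P G]
        _ = G * ((P * G) ^ (n + 1) * (G * (P * G))) := by rw [mul_assoc]
        _ = G * (P * G) ^ (n + 1 + 1) := by rw [key]
  have hPGPG : ∀ n : ℕ, (P * G) ^ (n + 2) = P * (G * P * G) ^ (n + 1) := by
    intro n
    calc (P * G) ^ (n + 2) = (P * G) * (P * G) ^ (n + 1) := pow_succ' _ _
      _ = P * (G * (P * G) ^ (n + 1)) := by rw [mul_assoc]
      _ = P * (G * P * G) ^ (n + 1) := by rw [← hGPG n]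
  -- reversibility swap for (PG)^l vs (GP)^l
  have hrevPG : ∀ x y, π x * (P * G) x y = π y * ((G * P) y x) :=
    my_rev_mul π hP.2 hGr.2
  have hswap : klDiv π ((P * G) ^ (m + 2)) (Pimat π)
      = klDiv π ((G * P) ^ (m + 2)) (Pimat π) :=
    my_klDiv_swap π hπ _ _ (my_rev_pow π hrevPG (m + 2))
  refine ⟨?_, hswap, ?_⟩
  · -- first inequality
    have h1 : (G * P * G) ^ (m + 2) = G * (P * G) ^ (m + 2) := hGPG (m + 1)
    rw [h1]
    exact my_dpi π hπ G hGs hGst _ (my_pow_stochastic hPGs (m + 2)).1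
  · -- third inequality
    have h3 : (P * G) ^ (m + 2) = P * (G * P * G) ^ (m + 1) := hPGPG m
    have : klDiv π ((G * P) ^ (m + 2)) (Pimat π)
        = klDiv π (P * (G * P * G) ^ (m + 1)) (Pimat π) := by
      rw [← hswap, h3]
    rw [this]
    have hle := my_dpi π hπ P hP.1 hPst _ (my_pow_stochastic hGPGs (m + 1)).1
    simpa using hle

end
end GpgStmt
end

section
/- For any π-stationary P and any orbit partition of X, the trace of G P² equals the trace of the projection chain of P²: Tr(GP²) = Tr(P̄²‾), where P̄²‾ denotes the projection of P² with respect to the partition. -/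
open Finset Matrix

namespace GpgStmt

noncomputable section

variable {X : Type*}

/-- Tr(GP²) = Tr(projection of P²). -/
theorem stmt4 [Fintype X] [DecidableEq X] {k : ℕ} (π : X → ℝ) (o : X → Fin k)
    (hπ : ∀ x, 0 < π x) (hsum : ∑ x, π x = 1) (ho : Function.Surjective o)
    (P : Matrix X X ℝ) (hP : IsStationary π P) :
    Matrix.trace (gibbs π o * P ^ 2) = Matrix.trace (projChain π o (P ^ 2)) := by
  classical
  rw [Matrix.trace, Matrix.trace]
  simp only [Matrix.diag, Matrix.mul_apply, projChain, gibbs, Matrix.of_apply]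
  rw [← Finset.sum_fiberwise univ o
    (fun x => ∑ y, (if o x = o y then π y / orbMass π o (o x) else 0) * (P ^ 2) y x)]
  apply Finset.sum_congr rfl
  intro i _
  have h1 : ∀ x ∈ filter (fun x => o x = i) univ,
      (∑ y, (if o x = o y then π y / orbMass π o (o x) else 0) * (P ^ 2) y x)
        = ∑ y ∈ filter (fun y => o y = i) univ, π y / orbMass π o i * (P ^ 2) y x := by
    intro x hx
    rw [mem_filter] at hx
    rw [hx.2, Finset.sum_filter]
    apply Finset.sum_congr rfl
    intro y _
    by_cases h : o y = i
    · simp [h]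
    · simp [h, Ne.symm h]
  rw [Finset.sum_congr rfl h1, Finset.mul_sum, Finset.sum_comm]
  apply Finset.sum_congr rfl
  intro x _
  rw [Finset.mul_sum]
  apply Finset.sum_congr rfl
  intro y _
  ring

end
end GpgStmt
end

section
/- For π-reversible P and a two-block partition X = S ⊔ S' with S ≠ ∅, X, the squared weighted Frobenius norm satisfies ‖G_S P − Π‖²_{F,π} = 1 − (1/(π(S)π(S'))) Σ_{x∈S, y∈S'} π(x)P²(x,y). In particular minimising ‖G_S P − Π‖²_{F,π} over nontrivial S is equivalent to maximising g(S) := (1/(π(S)π(S'))) Σ_{x∈S, y∈S'} π(x)P²(x,y). -/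
open Finset Matrix

namespace GpgStmt

noncomputable section

variable {X : Type*}

lemma stationary_of_rev [Fintype X] (π : X → ℝ) (P : Matrix X X ℝ)
    (hP : IsReversible π P) (y : X) : ∑ x, π x * P x y = π y := by
  calc ∑ x, π x * P x y = ∑ x, π y * P y x := by
        exact Finset.sum_congr rfl fun x _ => hP.2 x y
    _ = π y * ∑ x, P y x := by rw [Finset.mul_sum]
    _ = π y := by rw [hP.1.2, mul_one]

lemma key_frob [Fintype X] [DecidableEq X] (π : X → ℝ)
    (hπ : ∀ x, 0 < π x) (hsum : ∑ x, π x = 1)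
    (P : Matrix X X ℝ) (hP : IsReversible π P) (S : Finset X)
    (hS : S ≠ ∅) (hS' : S ≠ Finset.univ) :
    frobSq π (gibbsTwo π S * P - Pimat π) = 1 - gfun π P S := by
  have hs : 0 < mass π S :=
    Finset.sum_pos (fun x _ => hπ x) (Finset.nonempty_iff_ne_empty.2 hS)
  have hs'' : 0 < mass π Sᶜ :=
    Finset.sum_pos (fun x _ => hπ x)
      (Finset.nonempty_iff_ne_empty.2 fun h => hS' ((Finset.compl_eq_empty_iff S).1 h))
  have hss : mass π S + mass π Sᶜ = 1 := by
    rw [mass, mass, Finset.sum_add_sum_compl, hsum]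
  set s : ℝ := mass π S with hsdef
  set s' : ℝ := mass π Sᶜ with hs'def
  have hsne : s ≠ 0 := ne_of_gt hs
  have hs'ne : s' ≠ 0 := ne_of_gt hs''
  have h1s : s' = 1 - s := by linarith
  set PS : X → ℝ := fun x => ∑ z ∈ S, P x z with hPSdef
  set T : ℝ := ∑ x, π x * (PS x) ^ 2 with hTdef
  have hstat : ∀ y, ∑ x, π x * P x y = π y := stationary_of_rev π P hP
  -- sum of π weighted PS
  have hPSsum : ∑ x, π x * PS x = s := by
    calc ∑ x, π x * PS x = ∑ x, ∑ z ∈ S, π x * P x z := by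
          exact Finset.sum_congr rfl fun x _ => by rw [hPSdef, Finset.mul_sum]
      _ = ∑ z ∈ S, ∑ x, π x * P x z := Finset.sum_comm
      _ = ∑ z ∈ S, π z := Finset.sum_congr rfl fun z _ => hstat z
      _ = s := rfl
  -- reversibility partial sums
  have hrevS : ∀ x, ∑ z ∈ S, π z * P z x = π x * PS x := by
    intro x
    calc ∑ z ∈ S, π z * P z x = ∑ z ∈ S, π x * P x z :=
          Finset.sum_congr rfl fun z _ => hP.2 z x
      _ = π x * PS x := by rw [hPSdef, Finset.mul_sum]
  have hrevSc : ∀ x, ∑ z ∈ Sᶜ, π z * P z x = π x * (1 - PS x) := by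
    intro x
    have := Finset.sum_add_sum_compl S (fun z => π z * P z x)
    rw [hstat x, hrevS x] at this
    nlinarith [this]
  -- entries of gibbsTwo * P
  have hGP : ∀ y x, (gibbsTwo π S * P) y x =
      if y ∈ S then π x * PS x / s else π x * (1 - PS x) / s' := by
    intro y x
    rw [Matrix.mul_apply]
    by_cases hy : y ∈ S
    · simp only [gibbsTwo, Matrix.of_apply, hy, if_true, ite_mul, zero_mul]
      rw [Finset.sum_ite_mem, Finset.univ_inter]
      rw [show (∑ z ∈ S, π z / mass π S * P z x) = (∑ z ∈ S, π z * P z x) / s by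
        rw [Finset.sum_div]; exact Finset.sum_congr rfl fun z _ => by ring]
      rw [hrevS x]
    · simp only [gibbsTwo, Matrix.of_apply, hy, if_false, ite_mul, zero_mul]
      rw [show (∑ z, (if z ∈ S then (0:ℝ) else π z / mass π Sᶜ * P z x))
          = ∑ z, (if z ∈ Sᶜ then π z / mass π Sᶜ * P z x else 0) by
        exact Finset.sum_congr rfl fun z _ => by
          by_cases hz : z ∈ S <;> simp [hz]]
      rw [Finset.sum_ite_mem, Finset.univ_inter]
      rw [show (∑ z ∈ Sᶜ, π z / mass π Sᶜ * P z x) = (∑ z ∈ Sᶜ, π z * P z x) / s' by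
        rw [Finset.sum_div]; exact Finset.sum_congr rfl fun z _ => by ring]
      rw [hrevSc x]
  -- inner sum of the Frobenius expansion
  have hinner : ∀ x,
      (∑ y, π y * ((gibbsTwo π S * P - Pimat π) y x) / π x
        * ((gibbsTwo π S * P - Pimat π) y x))
      = π x * (PS x - s) ^ 2 / (s * s') := by
    intro x
    have hMa : ∀ y, y ∈ S → (gibbsTwo π S * P - Pimat π) y x
        = π x * PS x / s - π x := by
      intro y hy
      simp [Matrix.sub_apply, Pimat, hGP y x, hy]
    have hMb : ∀ y, y ∈ Sᶜ → (gibbsTwo π S * P - Pimat π) y x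
        = π x * (1 - PS x) / s' - π x := by
      intro y hy
      simp only [Finset.mem_compl] at hy
      simp [Matrix.sub_apply, Pimat, hGP y x, hy]
    rw [← Finset.sum_add_sum_compl S]
    have eA : (∑ y ∈ S, π y * ((gibbsTwo π S * P - Pimat π) y x) / π x
          * ((gibbsTwo π S * P - Pimat π) y x))
        = ∑ y ∈ S, π y * (π x * PS x / s - π x) / π x * (π x * PS x / s - π x) :=
      Finset.sum_congr rfl fun y hy => by rw [hMa y hy]
    have eB : (∑ y ∈ Sᶜ, π y * ((gibbsTwo π S * P - Pimat π) y x) / π x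
          * ((gibbsTwo π S * P - Pimat π) y x))
        = ∑ y ∈ Sᶜ, π y * (π x * (1 - PS x) / s' - π x) / π x
            * (π x * (1 - PS x) / s' - π x) :=
      Finset.sum_congr rfl fun y hy => by rw [hMb y hy]
    rw [eA, eB]
    have e1 : ∀ (A : ℝ), (∑ y ∈ S, π y * A / π x * A) = s * (A * A / π x) := by
      intro A
      rw [show (∑ y ∈ S, π y * A / π x * A) = ∑ y ∈ S, π y * (A * A / π x) from
        Finset.sum_congr rfl fun y _ => by ring]
      rw [← Finset.sum_mul]
      rfl
    have e2 : ∀ (A : ℝ), (∑ y ∈ Sᶜ, π y * A / π x * A) = s' * (A * A / π x) := by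
      intro A
      rw [show (∑ y ∈ Sᶜ, π y * A / π x * A) = ∑ y ∈ Sᶜ, π y * (A * A / π x) from
        Finset.sum_congr rfl fun y _ => by ring]
      rw [← Finset.sum_mul]
      rfl
    have h1sne : (1 : ℝ) - s ≠ 0 := by rw [← h1s]; exact hs'ne
    have hπx : π x ≠ 0 := (hπ x).ne'
    have hA : π x * PS x / s - π x = π x * (PS x - s) / s := by
      field_simp
    have hB : π x * (1 - PS x) / s' - π x = π x * (s - PS x) / s' := by
      rw [h1s]; field_simp; ring
    rw [e1, e2, hA, hB, h1s]
    field_simp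
    ring
  -- the Frobenius norm
  have hfrob : frobSq π (gibbsTwo π S * P - Pimat π) = (T - s ^ 2) / (s * s') := by
    have : frobSq π (gibbsTwo π S * P - Pimat π)
        = ∑ x, ∑ y, π y * ((gibbsTwo π S * P - Pimat π) y x) / π x
            * ((gibbsTwo π S * P - Pimat π) y x) := by
      simp [frobSq, Matrix.trace, Matrix.diag, Matrix.mul_apply, piAdj]
    rw [this, Finset.sum_congr rfl (fun x _ => hinner x)]
    rw [show (∑ x, π x * (PS x - s) ^ 2 / (s * s'))
        = (∑ x, π x * (PS x - s) ^ 2) / (s * s') from (Finset.sum_div _ _ _).symm]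
    congr 1
    have expand : ∀ x, π x * (PS x - s) ^ 2
        = π x * (PS x) ^ 2 - 2 * s * (π x * PS x) + s ^ 2 * π x := by
      intro x; ring
    rw [Finset.sum_congr rfl fun x _ => expand x]
    rw [Finset.sum_add_distrib, Finset.sum_sub_distrib, ← Finset.mul_sum,
      ← Finset.mul_sum, hPSsum, hsum, ← hTdef]
    ring
  -- the g function
  have hD : (∑ x ∈ S, ∑ y ∈ Sᶜ, π x * (P * P) x y) = s - T := by
    have step1 : ∀ x, (∑ y ∈ Sᶜ, π x * (P * P) x y)
        = ∑ z, π x * P x z * (1 - PS z) := by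
      intro x
      have : ∀ y, π x * (P * P) x y = ∑ z, π x * P x z * P z y := by
        intro y
        rw [Matrix.mul_apply, Finset.mul_sum]
        exact Finset.sum_congr rfl fun z _ => by ring
      rw [Finset.sum_congr rfl fun y _ => this y, Finset.sum_comm]
      refine Finset.sum_congr rfl fun z _ => ?_
      rw [← Finset.mul_sum]
      have hcompl : (∑ y ∈ Sᶜ, P z y) = 1 - PS z := by
        have := Finset.sum_add_sum_compl S (fun y => P z y)
        rw [hP.1.2 z] at this
        have hps : (∑ y ∈ S, P z y) = PS z := rfl
        linarith [this, hps ▸ this]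
      rw [hcompl]
    rw [Finset.sum_congr rfl fun x _ => step1 x, Finset.sum_comm]
    have step2 : ∀ z, (∑ x ∈ S, π x * P x z * (1 - PS z))
        = π z * PS z * (1 - PS z) := by
      intro z
      rw [← Finset.sum_mul]
      congr 1
      calc ∑ x ∈ S, π x * P x z = ∑ x ∈ S, π z * P z x :=
            Finset.sum_congr rfl fun x _ => hP.2 x z
        _ = π z * PS z := by rw [hPSdef, Finset.mul_sum]
    rw [Finset.sum_congr rfl fun z _ => step2 z]
    have expand : ∀ z, π z * PS z * (1 - PS z)
        = π z * PS z - π z * (PS z) ^ 2 := by intro z; ring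
    rw [Finset.sum_congr rfl fun z _ => expand z, Finset.sum_sub_distrib,
      hPSsum, ← hTdef]
  have hg : gfun π P S = (s - T) / (s * s') := by
    rw [gfun, hD, ← hsdef, ← hs'def]; ring
  rw [hfrob, hg, h1s]
  have h1sne : (1 : ℝ) - s ≠ 0 := by rw [← h1s]; exact hs'ne
  field_simp
  ring

/-- ‖G_S P − Π‖²_{F,π} = 1 − g(S), and minimising the Frobenius
objective over nontrivial S is equivalent to maximising g. -/
theorem stmt8 [Fintype X] [DecidableEq X] (π : X → ℝ)
    (hπ : ∀ x, 0 < π x) (hsum : ∑ x, π x = 1)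
    (P : Matrix X X ℝ) (hP : IsReversible π P) :
    (∀ S : Finset X, S ≠ ∅ → S ≠ Finset.univ →
      frobSq π (gibbsTwo π S * P - Pimat π) = 1 - gfun π P S) ∧
    (∀ S T : Finset X, S ≠ ∅ → S ≠ Finset.univ → T ≠ ∅ → T ≠ Finset.univ →
      (frobSq π (gibbsTwo π S * P - Pimat π) ≤ frobSq π (gibbsTwo π T * P - Pimat π)
        ↔ gfun π P T ≤ gfun π P S)) := by
  refine ⟨fun S hS hS' => key_frob π hπ hsum P hP S hS hS', ?_⟩
  intro S T hS hS' hT hT'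
  rw [key_frob π hπ hsum P hP S hS hS', key_frob π hπ hsum P hP T hT hT']
  constructor <;> intro h <;> linarith

end
end GpgStmt
end

section
/- Let P be ergodic and π-stationary with |X| ≥ 2, and let f(S) = ‖G_S P − Π‖²_{F,π} = 1 − g(S). Any maximiser U* of h over A = {S : 0 < π(S) ≤ 1/2} is an additive 1/2-approximate minimiser of f over A: f(U*) − f(S*) ≤ (1 − f(S*))/2 ≤ 1/2, where S* minimises f over A. -/
open Finset Matrix

namespace GpgStmt

noncomputable section

variable {X : Type*}

lemma frobSq_nonneg [Fintype X] (π : X → ℝ) (hπ : ∀ x, 0 < π x) (M : Matrix X X ℝ) :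
    0 ≤ frobSq π M := by
  unfold frobSq piAdj
  rw [Matrix.trace]
  apply Finset.sum_nonneg; intro x _
  rw [Matrix.diag, Matrix.mul_apply]
  apply Finset.sum_nonneg; intro y _
  simp only [Matrix.of_apply]
  have : π y * M y x / π x * M y x = (π y / π x) * (M y x)^2 := by ring
  rw [this]
  exact mul_nonneg (div_nonneg (hπ y).le (hπ x).le) (sq_nonneg _)

lemma sandwich [Fintype X] [DecidableEq X] (π : X → ℝ)
    (hπ : ∀ x, 0 < π x) (hsum : ∑ x, π x = 1)
    (P : Matrix X X ℝ) (hP : IsStationary π P)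
    (S : Finset X) (h0 : 0 < mass π S) (h2 : mass π S ≤ 1 / 2) :
    hfun π P S ≤ gfun π P S ∧ gfun π P S ≤ 2 * hfun π P S := by
  have hmc : mass π S + mass π Sᶜ = 1 := by
    rw [mass, mass, Finset.sum_add_sum_compl]; exact hsum
  have hc1 : mass π Sᶜ ≤ 1 := by linarith
  have hc2 : (1:ℝ)/2 ≤ mass π Sᶜ := by linarith
  have hc0 : 0 < mass π Sᶜ := by linarith
  have hSig : 0 ≤ ∑ x ∈ S, ∑ y ∈ Sᶜ, π x * (P * P) x y := by
    apply Finset.sum_nonneg; intro x _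
    apply Finset.sum_nonneg; intro y _
    have : 0 ≤ (P * P) x y := by
      rw [Matrix.mul_apply]
      exact Finset.sum_nonneg fun z _ => mul_nonneg (hP.1.1 x z) (hP.1.1 z y)
    exact mul_nonneg (hπ x).le this
  unfold gfun hfun
  constructor
  · apply mul_le_mul_of_nonneg_right _ hSig
    rw [div_le_div_iff₀ (by positivity) (by positivity)]
    nlinarith
  · have key : 1 / (mass π S * mass π Sᶜ) ≤ 2 * (1 / mass π S) := by
      rw [div_le_iff₀ (by positivity)]
      have h2' : 2 * (1 / mass π S) * (mass π S * mass π Sᶜ) = 2 * mass π Sᶜ := by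
        field_simp
      rw [h2']; linarith
    have := mul_le_mul_of_nonneg_right key hSig
    linarith

/-- any maximiser of h over A = {S : 0 < π(S) ≤ 1/2} is an additive
1/2-approximate minimiser of f(S) = ‖G_S P − Π‖²_{F,π} = 1 − g(S) over A. -/
theorem stmt11 [Fintype X] [DecidableEq X] (π : X → ℝ)
    (hπ : ∀ x, 0 < π x) (hsum : ∑ x, π x = 1) (hcard : 2 ≤ Fintype.card X)
    (P : Matrix X X ℝ) (hP : IsStationary π P) (herg : IsErgodic P)
    (hfg : ∀ S : Finset X, 0 < mass π S → mass π S ≤ 1 / 2 →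
      frobSq π (gibbsTwo π S * P - Pimat π) = 1 - gfun π P S)
    (U : Finset X) (hU : 0 < mass π U ∧ mass π U ≤ 1 / 2)
    (hUmax : ∀ S : Finset X, 0 < mass π S → mass π S ≤ 1 / 2 → hfun π P S ≤ hfun π P U)
    (Sstar : Finset X) (hSstar : 0 < mass π Sstar ∧ mass π Sstar ≤ 1 / 2)
    (hSmin : ∀ S : Finset X, 0 < mass π S → mass π S ≤ 1 / 2 →
      frobSq π (gibbsTwo π Sstar * P - Pimat π) ≤ frobSq π (gibbsTwo π S * P - Pimat π)) :
    frobSq π (gibbsTwo π U * P - Pimat π) - frobSq π (gibbsTwo π Sstar * P - Pimat π)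
        ≤ (1 - frobSq π (gibbsTwo π Sstar * P - Pimat π)) / 2 ∧
    (1 - frobSq π (gibbsTwo π Sstar * P - Pimat π)) / 2 ≤ 1 / 2 := by
  have hfgU := hfg U hU.1 hU.2
  have hfgS := hfg Sstar hSstar.1 hSstar.2
  have hsU := sandwich π hπ hsum P hP U hU.1 hU.2
  have hsS := sandwich π hπ hsum P hP Sstar hSstar.1 hSstar.2
  have hhUS := hUmax Sstar hSstar.1 hSstar.2
  have hnn := frobSq_nonneg π hπ (gibbsTwo π Sstar * P - Pimat π)
  constructor
  · rw [hfgU, hfgS]; linarith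
  · linarith


end
end GpgStmt
end

section
/- For π-reversible P and nontrivial S ⊂ X, the second eigenvalue of the two-block projection chain satisfies λ₂(P̄) = 1 − (1/(π(S)π(S'))) Σ_{x∈S, y∈S'} π(x)P(x,y), and for every l ∈ ℕ, ‖(G_S P G_S)^l − Π‖²_{F,π} = λ₂(P̄)^{2l} = (1 − (1/(π(S)π(S'))) Σ_{x∈S,y∈S'} π(x)P(x,y))^{2l}. -/
open Finset Matrix

namespace GpgStmt

noncomputable section

variable {X : Type*}

/-- Indicator map of the two-block partition (S, Sᶜ). -/
def twoBlock [Fintype X] [DecidableEq X] (S : Finset X) : X → Fin 2 :=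
  fun x => if x ∈ S then 0 else 1

/-! The block averages `G_S` project onto the block-constant functions, spanned by `1` and the
centred indicator `ψ = 1_S − π(S)`, which are `π`-orthogonal. Since `P` is stochastic and
reversible, all four block flows are determined by `Q = ∑_{x∈S, y∈Sᶜ} π(x)P(x,y)`, and one reads
off `G_S P G_S = Π + λ Π_ψ` with `λ = 1 − Q/(π(S)π(Sᶜ))` and `Π_ψ` the `π`-orthogonal projection
onto `ψ`. As `Π` and `Π_ψ` are orthogonal projections, `(G_S P G_S)^l − Π = λ^l Π_ψ`, whose squared
Frobenius norm is `λ^{2l}`; the same flows give `Tr P̄ = 2 − Q/(π(S)π(Sᶜ))`. -/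

theorem pow_succ_add_smul_of_orthogonal {R A : Type*} [CommSemiring R] [Semiring A] [Algebra R A]
    {e k : A} (he : IsIdempotentElem e) (hk : IsIdempotentElem k) (hek : e * k = 0)
    (hke : k * e = 0) (c : R) (n : ℕ) : (e + c • k) ^ (n + 1) = e + c ^ (n + 1) • k := by
  induction n with
  | zero => rw [pow_one, pow_one]
  | succ n ih =>
    rw [pow_succ, ih]
    simp only [add_mul, mul_add, smul_mul_assoc, mul_smul_comm, he.eq, hk.eq, hek, hke, smul_zero,
      add_zero, zero_add, smul_smul]
    rw [← pow_succ']

section RankOne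

variable [Fintype X] (π : X → ℝ)

def piInner (u v : X → ℝ) : ℝ := ∑ x, π x * u x * v x

/-- The operator `f ↦ u ⟪v, f⟫_π` on `ℓ²(π)`. -/
def rankOne (u v : X → ℝ) : Matrix X X ℝ := of fun x y => u x * (π y * v y)

def orthProj (u : X → ℝ) : Matrix X X ℝ := (piInner π u u)⁻¹ • rankOne π u u

lemma piInner_comm (u v : X → ℝ) : piInner π u v = piInner π v u :=
  Finset.sum_congr rfl fun _ _ => by ring

lemma rankOne_mul_rankOne (u v u' v' : X → ℝ) :
    rankOne π u v * rankOne π u' v' = piInner π v u' • rankOne π u v' := by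
  ext x y
  simp only [rankOne, mul_apply, of_apply, Matrix.smul_apply, smul_eq_mul, piInner, Finset.sum_mul]
  exact Finset.sum_congr rfl fun _ _ => by ring

lemma trace_rankOne (u v : X → ℝ) : trace (rankOne π u v) = piInner π u v :=
  Finset.sum_congr rfl fun _ _ => by simp only [diag_apply, rankOne, of_apply]; ring

lemma piAdj_rankOne (hπ : ∀ x, π x ≠ 0) (u v : X → ℝ) :
    piAdj π (rankOne π u v) = rankOne π v u := by
  ext x y
  simp only [piAdj, rankOne, of_apply]
  field_simp [hπ x]

lemma piAdj_smul (c : ℝ) (M : Matrix X X ℝ) : piAdj π (c • M) = c • piAdj π M := by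
  ext x y
  simp only [piAdj, of_apply, Matrix.smul_apply, smul_eq_mul]
  ring

lemma frobSq_smul (c : ℝ) (M : Matrix X X ℝ) : frobSq π (c • M) = c ^ 2 * frobSq π M := by
  rw [frobSq, frobSq, piAdj_smul, smul_mul_smul_comm, trace_smul, smul_eq_mul, sq]

lemma frobSq_rankOne (hπ : ∀ x, π x ≠ 0) (u v : X → ℝ) :
    frobSq π (rankOne π u v) = piInner π u u * piInner π v v := by
  rw [frobSq, piAdj_rankOne π hπ, rankOne_mul_rankOne, trace_smul, trace_rankOne, smul_eq_mul]

variable {π}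

lemma isIdempotentElem_orthProj {u : X → ℝ} (hu : piInner π u u ≠ 0) :
    IsIdempotentElem (orthProj π u) := by
  rw [IsIdempotentElem, orthProj, smul_mul_smul_comm, rankOne_mul_rankOne, smul_smul]
  congr 1
  field_simp

lemma orthProj_mul_orthProj_of_piInner_eq_zero {u v : X → ℝ} (huv : piInner π u v = 0) :
    orthProj π u * orthProj π v = 0 := by
  rw [orthProj, orthProj, smul_mul_smul_comm, rankOne_mul_rankOne, huv, zero_smul, smul_zero]

lemma frobSq_orthProj (hπ : ∀ x, π x ≠ 0) {u : X → ℝ} (hu : piInner π u u ≠ 0) :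
    frobSq π (orthProj π u) = 1 := by
  rw [orthProj, frobSq_smul, frobSq_rankOne π hπ]
  field_simp

lemma orthProj_add_smul_orthProj_pow_succ [DecidableEq X] {u v : X → ℝ} (hu : piInner π u u ≠ 0)
    (hv : piInner π v v ≠ 0) (huv : piInner π u v = 0) (c : ℝ) (n : ℕ) :
    (orthProj π u + c • orthProj π v) ^ (n + 1) = orthProj π u + c ^ (n + 1) • orthProj π v :=
  pow_succ_add_smul_of_orthogonal (isIdempotentElem_orthProj hu) (isIdempotentElem_orthProj hv)
    (orthProj_mul_orthProj_of_piInner_eq_zero huv)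
    (orthProj_mul_orthProj_of_piInner_eq_zero (by rwa [piInner_comm])) c n

lemma piInner_one_one (hsum : ∑ x, π x = 1) : piInner π 1 1 = 1 := by
  simpa [piInner] using hsum

lemma Pimat_eq_orthProj_one (hsum : ∑ x, π x = 1) : Pimat π = orthProj π 1 := by
  ext x y
  simp [Pimat, orthProj, rankOne, piInner_one_one hsum]

end RankOne

section Flow

variable (π : X → ℝ) (P : Matrix X X ℝ)

def flow (A B : Finset X) : ℝ := ∑ x ∈ A, ∑ y ∈ B, π x * P x y

lemma flow_add_flow_compl [Fintype X] [DecidableEq X] (hrow : ∀ x, ∑ y, P x y = 1)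
    (A B : Finset X) :
    flow π P A B + flow π P A Bᶜ = mass π A := by
  rw [flow, flow, ← Finset.sum_add_distrib]
  refine Finset.sum_congr rfl fun x _ => ?_
  rw [Finset.sum_add_sum_compl, ← Finset.mul_sum, hrow x, mul_one]

lemma flow_comm (hrev : ∀ x y, π x * P x y = π y * P y x) (A B : Finset X) :
    flow π P A B = flow π P B A := by
  rw [flow, flow, Finset.sum_comm]
  exact Finset.sum_congr rfl fun y _ => Finset.sum_congr rfl fun x _ => hrev x y

lemma flow_self [Fintype X] [DecidableEq X] (hrow : ∀ x, ∑ y, P x y = 1) (S : Finset X) :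
    flow π P S S = mass π S - flow π P S Sᶜ :=
  eq_sub_of_add_eq (flow_add_flow_compl π P hrow S S)

lemma flow_compl_self [Fintype X] [DecidableEq X] (hP : IsReversible π P) (S : Finset X) :
    flow π P Sᶜ Sᶜ = mass π Sᶜ - flow π P S Sᶜ := by
  rw [← flow_add_flow_compl π P hP.1.2 Sᶜ S, flow_comm π P hP.2 Sᶜ S, add_sub_cancel_left]

end Flow

section TwoBlock

variable [Fintype X] [DecidableEq X] (π : X → ℝ) (S : Finset X)

def block (x : X) : Finset X := if x ∈ S then S else Sᶜ

lemma gibbsTwo_mul_mul_gibbsTwo_apply (M : Matrix X X ℝ) (x y : X) :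
    (gibbsTwo π S * M * gibbsTwo π S) x y
      = flow π M (block S x) (block S y) / (mass π (block S x) * mass π (block S y)) * π y := by
  have hrow : ∀ z, gibbsTwo π S x z
      = if z ∈ block S x then π z / mass π (block S x) else 0 := by
    intro z; by_cases hx : x ∈ S <;> by_cases hz : z ∈ S <;> simp [gibbsTwo, block, hx, hz]
  have hcol : ∀ w, gibbsTwo π S w y
      = if w ∈ block S y then π y / mass π (block S y) else 0 := by
    intro w; by_cases hw : w ∈ S <;> by_cases hy : y ∈ S <;> simp [gibbsTwo, block, hw, hy]
  simp only [mul_apply, hrow, hcol, ite_mul, zero_mul, mul_ite, mul_zero, Fintype.sum_ite_mem,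
    flow, Finset.sum_mul, Finset.sum_div]
  rw [Finset.sum_comm]
  exact Finset.sum_congr rfl fun _ _ => Finset.sum_congr rfl fun _ _ => by ring

lemma filter_twoBlock_eq_zero : Finset.filter (fun x => twoBlock S x = 0) Finset.univ = S := by
  ext x; by_cases h : x ∈ S <;> simp [twoBlock, h]

lemma filter_twoBlock_eq_one : Finset.filter (fun x => twoBlock S x = 1) Finset.univ = Sᶜ := by
  ext x; by_cases h : x ∈ S <;> simp [twoBlock, h]

lemma trace_projChain_twoBlock (P : Matrix X X ℝ) :
    trace (projChain π (twoBlock S) P)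
      = flow π P S S / mass π S + flow π P Sᶜ Sᶜ / mass π Sᶜ := by
  rw [trace, Fin.sum_univ_two]
  simp only [diag_apply, projChain, of_apply, orbMass, filter_twoBlock_eq_zero,
    filter_twoBlock_eq_one, Fin.isValue]
  rw [one_div_mul_eq_div, one_div_mul_eq_div]
  rfl

def centredIndicator (x : X) : ℝ := (if x ∈ S then 1 else 0) - mass π S

variable {π S}

lemma mass_compl (hsum : ∑ x, π x = 1) : mass π Sᶜ = 1 - mass π S := by
  rw [← hsum, ← Finset.sum_add_sum_compl S π, mass, mass, add_sub_cancel_left]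

lemma piInner_one_centredIndicator (hsum : ∑ x, π x = 1) :
    piInner π 1 (centredIndicator π S) = 0 := by
  simp only [piInner, centredIndicator, Pi.one_apply, mul_one, mul_sub, mul_ite, mul_zero,
    Finset.sum_sub_distrib, Fintype.sum_ite_mem, ← Finset.sum_mul, hsum, one_mul]
  exact sub_self _

lemma piInner_centredIndicator_self (hsum : ∑ x, π x = 1) :
    piInner π (centredIndicator π S) (centredIndicator π S) = mass π S * mass π Sᶜ := by
  rw [piInner, ← Finset.sum_add_sum_compl S]
  have hin : ∀ x ∈ S, π x * centredIndicator π S x * centredIndicator π S x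
      = π x * (1 - mass π S) ^ 2 := fun x hx => by
    simp only [centredIndicator, hx, ↓reduceIte]; ring
  have hout : ∀ x ∈ Sᶜ, π x * centredIndicator π S x * centredIndicator π S x
      = π x * mass π S ^ 2 := fun x hx => by
    simp only [centredIndicator, Finset.mem_compl.mp hx, ↓reduceIte]; ring
  rw [Finset.sum_congr rfl hin, Finset.sum_congr rfl hout, ← Finset.sum_mul, ← Finset.sum_mul]
  change mass π S * _ + mass π Sᶜ * _ = _
  rw [mass_compl hsum]; ring

end TwoBlock

section SecondEigenvalue

variable [Fintype X] [DecidableEq X] {π : X → ℝ} {P : Matrix X X ℝ} {S : Finset X}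

variable (π P S) in
def secondEigenvalue : ℝ := 1 - 1 / (mass π S * mass π Sᶜ) * flow π P S Sᶜ

lemma trace_projChain_twoBlock_sub_one (hsum : ∑ x, π x = 1) (hP : IsReversible π P)
    (hS : mass π S ≠ 0) (hSc : mass π Sᶜ ≠ 0) :
    trace (projChain π (twoBlock S) P) - 1 = secondEigenvalue π P S := by
  rw [trace_projChain_twoBlock, flow_self π P hP.1.2, flow_compl_self π P hP, secondEigenvalue]
  rw [mass_compl hsum] at hSc ⊢
  field_simp
  ring

theorem gibbsTwo_mul_mul_gibbsTwo_eq (hsum : ∑ x, π x = 1) (hP : IsReversible π P)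
    (hS : mass π S ≠ 0) (hSc : mass π Sᶜ ≠ 0) :
    gibbsTwo π S * P * gibbsTwo π S
      = Pimat π + secondEigenvalue π P S • orthProj π (centredIndicator π S) := by
  ext x y
  rw [gibbsTwo_mul_mul_gibbsTwo_apply, orthProj, piInner_centredIndicator_self hsum]
  have hflow := flow_comm π P hP.2 Sᶜ S
  have hSS := flow_self π P hP.1.2 S
  have hScSc := flow_compl_self π P hP S
  rw [mass_compl hsum] at hSc hScSc
  simp only [Matrix.add_apply, Matrix.smul_apply, Pimat, rankOne, of_apply, smul_eq_mul,
    secondEigenvalue, mass_compl hsum]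
  by_cases hx : x ∈ S <;> by_cases hy : y ∈ S <;>
    simp only [block, centredIndicator, hx, hy, ↓reduceIte, hflow, hSS, hScSc, mass_compl hsum] <;>
    field_simp <;> ring

end SecondEigenvalue

/-- `λ₂(P̄)` is encoded as `Tr(P̄) − 1`, the other eigenvalue of the stochastic `2 × 2` matrix `P̄`
being `1`. -/
theorem stmt12 [Fintype X] [DecidableEq X] (π : X → ℝ)
    (hπ : ∀ x, 0 < π x) (hsum : ∑ x, π x = 1)
    (P : Matrix X X ℝ) (hP : IsReversible π P)
    (S : Finset X) (hS : S ≠ ∅) (hS' : S ≠ Finset.univ) :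
    Matrix.trace (projChain π (twoBlock S) P) - 1
      = 1 - (1 / (mass π S * mass π Sᶜ)) * ∑ x ∈ S, ∑ y ∈ Sᶜ, π x * P x y ∧
    ∀ l : ℕ, 0 < l →
      frobSq π ((gibbsTwo π S * P * gibbsTwo π S) ^ l - Pimat π)
        = (Matrix.trace (projChain π (twoBlock S) P) - 1) ^ (2 * l) := by
  have hmS : 0 < mass π S := Finset.sum_pos (fun x _ => hπ x) (Finset.nonempty_of_ne_empty hS)
  have hmSc : 0 < mass π Sᶜ := Finset.sum_pos (fun x _ => hπ x)
    (by rwa [Finset.nonempty_iff_ne_empty, Ne, Finset.compl_eq_empty_iff])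
  have hgap := trace_projChain_twoBlock_sub_one hsum hP hmS.ne' hmSc.ne'
  refine ⟨hgap, fun l hl => ?_⟩
  obtain ⟨n, rfl⟩ := Nat.exists_eq_add_one_of_ne_zero hl.ne'
  have hψ : piInner π (centredIndicator π S) (centredIndicator π S) ≠ 0 := by
    rw [piInner_centredIndicator_self hsum]; positivity
  rw [hgap, gibbsTwo_mul_mul_gibbsTwo_eq hsum hP hmS.ne' hmSc.ne', Pimat_eq_orthProj_one hsum,
    orthProj_add_smul_orthProj_pow_succ (by rw [piInner_one_one hsum]; exact one_ne_zero) hψ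
      (piInner_one_centredIndicator hsum),
    add_sub_cancel_left, frobSq_smul, frobSq_orthProj (fun x => (hπ x).ne') hψ, mul_one, ← pow_mul,
    mul_comm]

end
end GpgStmt
end

section
/- For π-reversible P and nonempty proper S ⊂ X, the KL divergence D_KL^π(PG_S ‖ Π) equals T(S) − U(S), where T(S) = Σ_x π(x)[φ(P(x,S)) + φ(P(x,S'))] and U(S) = φ(π(S)) + φ(π(S')) with φ(t) = t log t; moreover T and U are supermodular set functions of S, so the objective is a difference of two supermodular (equivalently submodular) functions. -/
open Finset Matrix

namespace GpgStmt

noncomputable section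

variable {X : Type*}

/-- φ(t) = t log t. -/
def phiEnt (t : ℝ) : ℝ := t * Real.log t

/-- T(S) = Σ_x π(x)[φ(P(x,S)) + φ(P(x,S'))]. -/
def Tfun [Fintype X] [DecidableEq X] (π : X → ℝ) (P : Matrix X X ℝ) (S : Finset X) : ℝ :=
  ∑ x, π x * (phiEnt (∑ y ∈ S, P x y) + phiEnt (∑ y ∈ Sᶜ, P x y))

/-- U(S) = φ(π(S)) + φ(π(S')). -/
def Ufun [Fintype X] [DecidableEq X] (π : X → ℝ) (S : Finset X) : ℝ :=
  phiEnt (mass π S) + phiEnt (mass π Sᶜ)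



/-! Within a block, the columns of `G_S` are proportional to `π`, so `(P G_S)(x, y) / π(y)` equals
`P(x, S) / π(S)` on `S` and `P(x, S') / π(S')` on `S'`. The divergence is then
`Σ_x π(x) [P(x,S) log (P(x,S)/π(S)) + P(x,S') log (P(x,S')/π(S'))]`, and stationarity,
`Σ_x π(x) P(x,S) = π(S)`, turns the `log π(S)`, `log π(S')` terms into `U(S)`.

For supermodularity: for a nonnegative measure `μ`, the pair `(μ(A ∩ B), μ(A ∪ B))` has the same
sum as `(μ(A), μ(B))` and is more spread out, so `φ ∘ μ` is supermodular for convex `φ`;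
complementation swaps `∩` and `∪`, and `T`, `U` are nonnegative combinations of such functions. -/

lemma _root_.ConvexOn.add_le_add_of_le_of_add_eq {s : Set ℝ} {f : ℝ → ℝ} (hf : ConvexOn ℝ s f)
    {a b c d : ℝ} (ha : a ∈ s) (hd : d ∈ s) (hab : a ≤ b) (hac : a ≤ c) (hsum : a + d = b + c) :
    f b + f c ≤ f a + f d := by
  rcases hab.eq_or_lt with rfl | hab
  · obtain rfl : c = d := by linarith
    rfl
  have hda : 0 < d - a := by linarith
  set t := (b - a) / (d - a)
  have ht : t * (d - a) = b - a := div_mul_cancel₀ _ hda.ne'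
  have ht0 : 0 ≤ t := div_nonneg (by linarith) hda.le
  have ht1 : t ≤ 1 := (div_le_one hda).2 (by linarith)
  have hb := hf.2 ha hd (sub_nonneg.2 ht1) ht0 (sub_add_cancel 1 t)
  have hc := hf.2 ha hd ht0 (sub_nonneg.2 ht1) (add_sub_cancel t 1)
  simp only [smul_eq_mul] at hb hc
  rw [show (1 - t) * a + t * d = b by linarith] at hb
  rw [show t * a + (1 - t) * d = c by linarith] at hc
  linarith

namespace Supermodular

variable {ι : Type*} [DecidableEq ι] {F G : Finset ι → ℝ}

lemma add (hF : Supermodular F) (hG : Supermodular G) : Supermodular (F + G) := fun A B => by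
  simp only [Pi.add_apply]
  linarith [hF A B, hG A B]

lemma const_mul (hF : Supermodular F) {c : ℝ} (hc : 0 ≤ c) : Supermodular (fun S => c * F S) :=
  fun A B => by nlinarith [hF A B]

lemma sum {κ : Type*} (s : Finset κ) {F : κ → Finset ι → ℝ} (hF : ∀ k ∈ s, Supermodular (F k)) :
    Supermodular (fun S => ∑ k ∈ s, F k S) := fun A B => by
  rw [← Finset.sum_add_distrib, ← Finset.sum_add_distrib]
  exact Finset.sum_le_sum fun k hk => hF k hk A B

lemma comp_compl [Fintype ι] (hF : Supermodular F) : Supermodular (fun S => F Sᶜ) := fun A B => by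
  simp only [Finset.compl_inter, Finset.compl_union]
  linarith [hF Aᶜ Bᶜ]

end Supermodular

lemma supermodular_convexOn_comp_sum {ι : Type*} [DecidableEq ι] {f : ℝ → ℝ}
    (hf : ConvexOn ℝ (Set.Ici 0) f) {μ : ι → ℝ} (hμ : ∀ i, 0 ≤ μ i) :
    Supermodular (fun S => f (∑ i ∈ S, μ i)) := fun A B => by
  have hmono {C D : Finset ι} (h : C ⊆ D) : ∑ i ∈ C, μ i ≤ ∑ i ∈ D, μ i :=
    Finset.sum_le_sum_of_subset_of_nonneg h fun i _ _ => hμ i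
  refine hf.add_le_add_of_le_of_add_eq (Finset.sum_nonneg fun i _ => hμ i)
    (Finset.sum_nonneg fun i _ => hμ i) (hmono Finset.inter_subset_left)
    (hmono Finset.inter_subset_right) ?_
  rw [add_comm]
  exact Finset.sum_union_inter

lemma convexOn_phiEnt : ConvexOn ℝ (Set.Ici 0) phiEnt := Real.convexOn_mul_log

lemma supermodular_phiEnt_sum_add_sum_compl {ι : Type*} [Fintype ι] [DecidableEq ι] {μ : ι → ℝ}
    (hμ : ∀ i, 0 ≤ μ i) :
    Supermodular (fun S => phiEnt (∑ i ∈ S, μ i) + phiEnt (∑ i ∈ Sᶜ, μ i)) :=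
  have h := supermodular_convexOn_comp_sum convexOn_phiEnt hμ
  h.add h.comp_compl

lemma mul_log_div_eq_phiEnt_sub {p m : ℝ} (hm : 0 < m) :
    p * Real.log (p / m) = phiEnt p - p * Real.log m := by
  rcases eq_or_ne p 0 with rfl | hp
  · simp [phiEnt]
  · rw [Real.log_div hp hm.ne', phiEnt]
    ring

section Kernel

variable [Fintype X] {π : X → ℝ} {P : Matrix X X ℝ}

lemma IsReversible.isStationary (hP : IsReversible π P) : IsStationary π P := by
  refine ⟨hP.1, fun y => ?_⟩
  simp_rw [hP.2 _ y, ← Finset.mul_sum, hP.1.2, mul_one]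

lemma IsStationary.sum_mul_sum_eq_mass (hP : IsStationary π P) (S : Finset X) :
    ∑ x, π x * ∑ y ∈ S, P x y = mass π S := by
  simp_rw [Finset.mul_sum]
  rw [Finset.sum_comm]
  exact Finset.sum_congr rfl fun y _ => hP.2 y

lemma mul_gibbsTwo_apply [DecidableEq X] (π : X → ℝ) (P : Matrix X X ℝ) (S : Finset X)
    (x y : X) :
    (P * gibbsTwo π S) x y =
      if y ∈ S then (∑ z ∈ S, P x z) * (π y / mass π S)
      else (∑ z ∈ Sᶜ, P x z) * (π y / mass π Sᶜ) := by
  rw [Matrix.mul_apply, ← Finset.sum_add_sum_compl S]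
  by_cases hy : y ∈ S
  · rw [if_pos hy, Finset.sum_mul,
      Finset.sum_eq_zero (s := Sᶜ) fun z hz => by simp [gibbsTwo, Finset.mem_compl.1 hz, hy],
      add_zero]
    exact Finset.sum_congr rfl fun z hz => by simp [gibbsTwo, hz, hy]
  · rw [if_neg hy, Finset.sum_mul,
      Finset.sum_eq_zero (s := S) fun z hz => by simp [gibbsTwo, hz, hy], zero_add]
    exact Finset.sum_congr rfl fun z hz => by simp [gibbsTwo, Finset.mem_compl.1 hz, hy]

lemma mass_pos (hπ : ∀ x, 0 < π x) {S : Finset X} (hS : S.Nonempty) : 0 < mass π S :=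
  Finset.sum_pos (fun x _ => hπ x) hS

/-- On a block `T`, the row `(P G_S)(x, ·)` is `c = P(x, T)` spread proportionally to `π`, so its
divergence from `π` on `T` collapses to that of `c` against `π(T)`. -/
lemma sum_proportional_mul_log_div (hπ : ∀ x, 0 < π x) {T : Finset X} (hT : 0 < mass π T) (a c : ℝ) :
    ∑ y ∈ T, a * (c * (π y / mass π T)) * Real.log (c * (π y / mass π T) / π y) =
      a * (phiEnt c - c * Real.log (mass π T)) := by
  have hterm : ∀ y ∈ T, a * (c * (π y / mass π T)) * Real.log (c * (π y / mass π T) / π y) =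
      a * (c * Real.log (c / mass π T)) / mass π T * π y := fun y _ => by
    rw [show c * (π y / mass π T) / π y = c / mass π T by field_simp [(hπ y).ne']]
    ring
  rw [Finset.sum_congr rfl hterm, ← Finset.mul_sum, ← mass, div_mul_cancel₀ _ hT.ne',
    mul_log_div_eq_phiEnt_sub hT]

lemma klDiv_mul_gibbsTwo [DecidableEq X] (hπ : ∀ x, 0 < π x) (hP : IsStationary π P)
    {S : Finset X} (hS : S.Nonempty) (hSc : Sᶜ.Nonempty) :
    klDiv π (P * gibbsTwo π S) (Pimat π) = Tfun π P S - Ufun π S := by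
  have hrow : ∀ x, ∑ y, π x * (P * gibbsTwo π S) x y *
      Real.log ((P * gibbsTwo π S) x y / Pimat π x y) =
      π x * (phiEnt (∑ y ∈ S, P x y) + phiEnt (∑ y ∈ Sᶜ, P x y))
        - (π x * ∑ y ∈ S, P x y) * Real.log (mass π S)
        - (π x * ∑ y ∈ Sᶜ, P x y) * Real.log (mass π Sᶜ) := fun x => by
    rw [← Finset.sum_add_sum_compl S]
    simp only [mul_gibbsTwo_apply, Pimat, Matrix.of_apply]
    rw [Finset.sum_congr rfl fun y (hy : y ∈ S) => by rw [if_pos hy],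
      Finset.sum_congr rfl fun y (hy : y ∈ Sᶜ) => by rw [if_neg (Finset.mem_compl.1 hy)],
      sum_proportional_mul_log_div hπ (mass_pos hπ hS), sum_proportional_mul_log_div hπ (mass_pos hπ hSc)]
    ring
  rw [klDiv, Finset.sum_congr rfl fun x _ => hrow x, Finset.sum_sub_distrib,
    Finset.sum_sub_distrib, ← Finset.sum_mul, ← Finset.sum_mul, hP.sum_mul_sum_eq_mass,
    hP.sum_mul_sum_eq_mass, Tfun, Ufun, phiEnt, phiEnt, sub_sub]

lemma supermodular_Tfun [DecidableEq X] (hπ : ∀ x, 0 ≤ π x) (hP : IsStochastic P) :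
    Supermodular (Tfun π P) :=
  Supermodular.sum _ fun x _ =>
    (supermodular_phiEnt_sum_add_sum_compl (hP.1 x)).const_mul (hπ x)

lemma supermodular_Ufun [DecidableEq X] (hπ : ∀ x, 0 ≤ π x) : Supermodular (Ufun π) :=
  supermodular_phiEnt_sum_add_sum_compl hπ

end Kernel

theorem stmt14_general [Fintype X] [DecidableEq X] (π : X → ℝ)
    (hπ : ∀ x, 0 < π x)
    (P : Matrix X X ℝ) (hP : IsReversible π P) :
    (∀ S : Finset X, S ≠ ∅ → S ≠ Finset.univ →
      klDiv π (P * gibbsTwo π S) (Pimat π) = Tfun π P S - Ufun π S) ∧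
    Supermodular (Tfun π P) ∧ Supermodular (Ufun π) := by
  refine ⟨fun S hS hSc => ?_, supermodular_Tfun (fun x => (hπ x).le) hP.1,
    supermodular_Ufun fun x => (hπ x).le⟩
  exact klDiv_mul_gibbsTwo hπ hP.isStationary (Finset.nonempty_of_ne_empty hS)
    ((Finset.compl_ne_univ_iff_nonempty _).1 (by rwa [compl_compl]))

/-- D_KL^π(PG_S ‖ Π) = T(S) − U(S), with T and U supermodular. -/
theorem stmt14 [Fintype X] [DecidableEq X] (π : X → ℝ)
    (hπ : ∀ x, 0 < π x) (hsum : ∑ x, π x = 1)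
    (P : Matrix X X ℝ) (hP : IsReversible π P) :
    (∀ S : Finset X, S ≠ ∅ → S ≠ Finset.univ →
      klDiv π (P * gibbsTwo π S) (Pimat π) = Tfun π P S - Ufun π S) ∧
    Supermodular (Tfun π P) ∧ Supermodular (Ufun π) :=
  stmt14_general π hπ P hP

end
end GpgStmt
end
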